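/- arXiv:2111.11228 — 4 statements merged into one kernel-verified Lean document; each statement's English description precedes it below -/
import Mathlib

section
/- Let α ∈ (0,1), β > 0, b₁, b₂ ∈ ℝ with b₁² + b₂² > 0. Then the system q₂/(1-q₂)² = β²α q₁ + b₁², q₁/(1-q₁)² = β²(1-α) q₂ + b₂² has a unique solution (q̄₁, q̄₂) ∈ [0,1) × [0,1). -/
/-!
Write `φ q = q / (1 - q)²`, a strictly increasing bijection `[0,1) → [0,∞)`, so that the system reads
`φ q₂ = a q₁ + d₁`, `φ q₁ = c q₂ + d₂` with `a, c > 0`. Existence: `q₁` is a fixed point of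
`t ↦ φ⁻¹(c φ⁻¹(a t + d₁) + d₂)`, a continuous self-map of `[0,1]`. Uniqueness: solutions are positive,
and `φ q / q = (1 - q)⁻²` is strictly increasing. If `x₁ < y₁` for two solutions, then `x₂ < y₂`, and
comparing `φ(x_i)/x_i < φ(y_i)/y_i` in both equations gives both `y₁ x₂ < x₁ y₂` and `x₁ y₂ < x₂ y₁`.
-/

open Set

noncomputable section

def phi (q : ℝ) : ℝ := q / (1 - q) ^ 2

/-- The smaller root of `y q² - (2y + 1) q + y = 0`, i.e. `(2y + 1 - √(4y + 1)) / (2y)`, with the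
numerator rationalized so that the formula also covers `y = 0`. -/
def phiInv (y : ℝ) : ℝ := 2 * y / (2 * y + 1 + √(4 * y + 1))

def IsSolution (a c d₁ d₂ : ℝ) (p : ℝ × ℝ) : Prop :=
  p.1 ∈ Ico (0 : ℝ) 1 ∧ p.2 ∈ Ico (0 : ℝ) 1 ∧ phi p.2 = a * p.1 + d₁ ∧ phi p.1 = c * p.2 + d₂

end

lemma phi_strictMonoOn : StrictMonoOn phi (Ico 0 1) := by
  rintro x ⟨hx0, -⟩ y ⟨-, hy1⟩ hxy
  have hx : 0 < (1 - x) ^ 2 := by nlinarith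
  have hy : 0 < (1 - y) ^ 2 := by nlinarith
  rw [phi, phi, div_lt_div_iff₀ hx hy]
  nlinarith [mul_pos (sub_pos.2 hxy) (sub_pos.2 (show x * y < 1 by nlinarith))]

lemma phi_zero : phi 0 = 0 := by simp [phi]

lemma mul_phi_lt_mul_phi {x y : ℝ} (hx : 0 < x) (hxy : x < y) (hy : y < 1) :
    y * phi x < x * phi y := by
  have hy2 : 0 < (1 - y) ^ 2 := by nlinarith
  calc y * phi x = x * y / (1 - x) ^ 2 := by rw [phi]; ring
    _ < x * y / (1 - y) ^ 2 := div_lt_div_of_pos_left (by nlinarith) hy2 (by nlinarith)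
    _ = x * phi y := by rw [phi]; ring

section phiInv

variable {y : ℝ}

lemma phiInv_denom_pos (hy : 0 ≤ y) : 0 < 2 * y + 1 + √(4 * y + 1) := by
  positivity

lemma phiInv_nonneg (hy : 0 ≤ y) : 0 ≤ phiInv y :=
  div_nonneg (by linarith) (phiInv_denom_pos hy).le

lemma phiInv_lt_one (hy : 0 ≤ y) : phiInv y < 1 := by
  rw [phiInv, div_lt_one (phiInv_denom_pos hy)]
  linarith [Real.sqrt_nonneg (4 * y + 1)]

lemma phi_phiInv (hy : 0 ≤ y) : phi (phiInv y) = y := by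
  have h1 : 1 - phiInv y ≠ 0 := (sub_pos.2 (phiInv_lt_one hy)).ne'
  have hd := phiInv_denom_pos hy
  have hs : √(4 * y + 1) ^ 2 = 4 * y + 1 := Real.sq_sqrt (by linarith)
  rw [phi, div_eq_iff (pow_ne_zero 2 h1), phiInv]
  generalize √(4 * y + 1) = s at hd hs
  field_simp
  linear_combination (-y) * hs

lemma continuousOn_phiInv : ContinuousOn phiInv (Ici 0) :=
  ContinuousOn.div (by fun_prop) (by fun_prop) fun _ hy => (phiInv_denom_pos hy).ne'

end phiInv

namespace IsSolution

variable {a c d₁ d₂ : ℝ}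

lemma pos (ha : 0 < a) (hc : 0 < c) (hd₁ : 0 ≤ d₁) (hd₂ : 0 ≤ d₂) (hd : 0 < d₁ + d₂)
    {p : ℝ × ℝ} (hp : IsSolution a c d₁ d₂ p) : 0 < p.1 ∧ 0 < p.2 := by
  obtain ⟨⟨h₁, -⟩, ⟨h₂, -⟩, e₁, e₂⟩ := hp
  have hp₁ : 0 < p.1 := by
    refine h₁.lt_of_ne' fun h => ?_
    rw [h, phi_zero] at e₂
    have h₂' : p.2 = 0 := by nlinarith
    rw [h, h₂', phi_zero] at e₁
    nlinarith
  refine ⟨hp₁, h₂.lt_of_ne' fun h => ?_⟩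
  rw [h, phi_zero] at e₁
  nlinarith

lemma fst_not_lt (ha : 0 < a) (hc : 0 < c) (hd₁ : 0 ≤ d₁) (hd₂ : 0 ≤ d₂)
    {x y : ℝ × ℝ} (hx : IsSolution a c d₁ d₂ x) (hy : IsSolution a c d₁ d₂ y)
    (hx₁ : 0 < x.1) (hx₂ : 0 < x.2) : ¬ x.1 < y.1 := by
  obtain ⟨⟨-, hx11⟩, ⟨hx20, hx21⟩, ex₁, ex₂⟩ := hx
  obtain ⟨⟨-, hy11⟩, ⟨hy20, hy21⟩, ey₁, ey₂⟩ := hy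
  intro hlt
  have hlt₂ : x.2 < y.2 := (phi_strictMonoOn.lt_iff_lt ⟨hx20, hx21⟩ ⟨hy20, hy21⟩).1 <| by
    rw [ex₁, ey₁]; nlinarith
  have k₁ := mul_phi_lt_mul_phi hx₁ hlt hy11
  have k₂ := mul_phi_lt_mul_phi hx₂ hlt₂ hy21
  rw [ex₂, ey₂] at k₁
  rw [ex₁, ey₁] at k₂
  have h₁ : y.1 * x.2 < x.1 * y.2 := by nlinarith
  have h₂ : x.1 * y.2 < x.2 * y.1 := by nlinarith
  linarith

lemma eq (ha : 0 < a) (hc : 0 < c) (hd₁ : 0 ≤ d₁) (hd₂ : 0 ≤ d₂) (hd : 0 < d₁ + d₂)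
    {x y : ℝ × ℝ} (hx : IsSolution a c d₁ d₂ x) (hy : IsSolution a c d₁ d₂ y) : x = y := by
  obtain ⟨hx₁, hx₂⟩ := hx.pos ha hc hd₁ hd₂ hd
  obtain ⟨hy₁, hy₂⟩ := hy.pos ha hc hd₁ hd₂ hd
  have h₁ : x.1 = y.1 := le_antisymm (not_lt.1 (hy.fst_not_lt ha hc hd₁ hd₂ hx hy₁ hy₂))
    (not_lt.1 (hx.fst_not_lt ha hc hd₁ hd₂ hy hx₁ hx₂))
  have h₂ : c * x.2 = c * y.2 := by linarith [hx.2.2.2, hy.2.2.2, congrArg phi h₁]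
  exact Prod.ext h₁ (mul_left_cancel₀ hc.ne' h₂)

end IsSolution

lemma exists_isSolution {a c d₁ d₂ : ℝ} (ha : 0 ≤ a) (hc : 0 ≤ c) (hd₁ : 0 ≤ d₁) (hd₂ : 0 ≤ d₂) :
    ∃ p, IsSolution a c d₁ d₂ p := by
  have harg₁ {t : ℝ} (ht : 0 ≤ t) : 0 ≤ a * t + d₁ := by positivity
  have harg₂ {t : ℝ} (ht : 0 ≤ t) : 0 ≤ c * phiInv (a * t + d₁) + d₂ :=
    have := phiInv_nonneg (harg₁ ht); by positivity
  set T : ℝ → ℝ := fun t => phiInv (c * phiInv (a * t + d₁) + d₂)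
  have hT : ContinuousOn T (Icc 0 1) := by
    refine continuousOn_phiInv.comp ?_ fun t ht => harg₂ ht.1
    exact ((continuousOn_phiInv.comp (by fun_prop) fun t ht => harg₁ ht.1).const_smul c).add
      continuousOn_const
  obtain ⟨t, ht, hfix⟩ := exists_mem_Icc_isFixedPt hT zero_le_one
    (phiInv_nonneg (harg₂ le_rfl)) (phiInv_lt_one (harg₂ zero_le_one)).le
  refine ⟨(t, phiInv (a * t + d₁)), ⟨ht.1, hfix ▸ phiInv_lt_one (harg₂ ht.1)⟩,
    ⟨phiInv_nonneg (harg₁ ht.1), phiInv_lt_one (harg₁ ht.1)⟩, phi_phiInv (harg₁ ht.1), ?_⟩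
  exact (congrArg phi hfix.eq).symm.trans (phi_phiInv (harg₂ ht.1))

/-- For `α ∈ (0,1)`, `β > 0`, `b₁² + b₂² > 0`, the system
`q₂/(1-q₂)² = β²α q₁ + b₁²`, `q₁/(1-q₁)² = β²(1-α) q₂ + b₂²`
has a unique solution in `[0,1) × [0,1)`. -/
theorem stmt6 (α β b₁ b₂ : ℝ) (hα : α ∈ Set.Ioo (0 : ℝ) 1) (hβ : 0 < β)
    (hb : 0 < b₁ ^ 2 + b₂ ^ 2) :
    ∃! p : ℝ × ℝ, p.1 ∈ Set.Ico (0 : ℝ) 1 ∧ p.2 ∈ Set.Ico (0 : ℝ) 1 ∧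
      p.2 / (1 - p.2) ^ 2 = β ^ 2 * α * p.1 + b₁ ^ 2 ∧
      p.1 / (1 - p.1) ^ 2 = β ^ 2 * (1 - α) * p.2 + b₂ ^ 2 := by
  have ha : 0 < β ^ 2 * α := by have := hα.1; positivity
  have hc : 0 < β ^ 2 * (1 - α) := by have := sub_pos.2 hα.2; positivity
  obtain ⟨p, hp⟩ := exists_isSolution ha.le hc.le (sq_nonneg b₁) (sq_nonneg b₂)
  exact ⟨p, hp, fun q hq => IsSolution.eq ha hc (sq_nonneg b₁) (sq_nonneg b₂) hb hq hp⟩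
end

section
/- Let α ∈ (0,1) and β > 0 with β⁴α(1-α) < 1. Then the only solution (q₁, q₂) ∈ [0,1)² of the system q₂/(1-q₂)² = β²α q₁ and q₁/(1-q₁)² = β²(1-α) q₂ is (0,0). -/
/-- For `α ∈ (0,1)`, `β > 0` with `β⁴α(1-α) < 1`, the only solution in `[0,1)²` of
`q₂/(1-q₂)² = β²α q₁` and `q₁/(1-q₁)² = β²(1-α) q₂` is `(0,0)`. -/
theorem stmt7 (α β : ℝ) (hα : α ∈ Set.Ioo (0 : ℝ) 1) (hβ : 0 < β)
    (hsmall : β ^ 4 * α * (1 - α) < 1) :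
    ∀ q₁ ∈ Set.Ico (0 : ℝ) 1, ∀ q₂ ∈ Set.Ico (0 : ℝ) 1,
      q₂ / (1 - q₂) ^ 2 = β ^ 2 * α * q₁ →
      q₁ / (1 - q₁) ^ 2 = β ^ 2 * (1 - α) * q₂ →
      q₁ = 0 ∧ q₂ = 0 := by
  rintro q₁ ⟨h1, h1'⟩ q₂ ⟨h2, h2'⟩ e1 e2
  have p1 : (0:ℝ) < 1 - q₁ := by linarith
  have p2 : (0:ℝ) < 1 - q₂ := by linarith
  have s1 : (1 - q₁) ^ 2 ≠ 0 := by positivity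
  have s2 : (1 - q₂) ^ 2 ≠ 0 := by positivity
  have e1' : q₂ = β ^ 2 * α * q₁ * (1 - q₂) ^ 2 := by
    field_simp at e1; linarith
  have e2' : q₁ = β ^ 2 * (1 - α) * q₂ * (1 - q₁) ^ 2 := by
    field_simp at e2; linarith
  have key : q₁ * (1 - β ^ 4 * α * (1 - α) * ((1 - q₁) ^ 2 * (1 - q₂) ^ 2)) = 0 := by
    linear_combination e2' + β ^ 2 * (1 - α) * (1 - q₁) ^ 2 * e1'
  have hc : (0:ℝ) ≤ β ^ 4 * α * (1 - α) := by
    exact mul_nonneg (mul_nonneg (by positivity) hα.1.le) (by linarith [hα.2])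
  have hs1 : (1 - q₁) ^ 2 ≤ 1 := by nlinarith
  have hs2 : (1 - q₂) ^ 2 ≤ 1 := by nlinarith
  have hlt : β ^ 4 * α * (1 - α) * ((1 - q₁) ^ 2 * (1 - q₂) ^ 2) < 1 := by
    calc β ^ 4 * α * (1 - α) * ((1 - q₁) ^ 2 * (1 - q₂) ^ 2)
        ≤ β ^ 4 * α * (1 - α) * 1 := by
          apply mul_le_mul_of_nonneg_left _ hc
          nlinarith [sq_nonneg (1 - q₁), sq_nonneg (1 - q₂)]
      _ < 1 := by linarith
  have hq1 : q₁ = 0 := by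
    rcases mul_eq_zero.mp key with h | h
    · exact h
    · linarith
  refine ⟨hq1, ?_⟩
  rw [hq1] at e1'
  simpa using e1'
end

section
/- Let α ∈ (0,1) and β > 0 with β⁴α(1-α) > 1. Then the system q₂/(1-q₂)² = β²α q₁ and q₁/(1-q₁)² = β²(1-α) q₂ has exactly one solution (q̄₁, q̄₂) ∈ (0,1)² with q̄₁ > 0 and q̄₂ > 0, in addition to the trivial solution (0,0). -/
/-!
Put `u = 1 - q₁`, `v = 1 - q₂`, `a = β²α`, `b = β²(1-α)` and `s = 1/√(ab) < 1`. Multiplying the two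
equations gives `ab (uv)² = 1`, i.e. `uv = s`; feeding this back into either equation turns the
system into the line `u - s = r (v - s)` with slope `r = a s > 0`. In the positive quadrant an
increasing line meets the decreasing hyperbola `uv = s` at most once, and it does meet it, at a
point of `(s, 1)²`, because the line passes through `(s, s)`, which lies below the hyperbola.
-/

open Set

lemma exists_hyperbola_line {r s : ℝ} (hr : 0 < r) (hs : 0 < s) (hs1 : s < 1) :
    ∃ u v : ℝ, u ∈ Ioo s 1 ∧ v ∈ Ioo s 1 ∧ u * v = s ∧ u - s = r * (v - s) := by
  set g : ℝ → ℝ := fun u ↦ u * (s + (u - s) / r)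
  have hg : ContinuousOn g (Icc s 1) := by fun_prop
  have hgs : g s < s := by simp only [g, sub_self, zero_div, add_zero]; nlinarith
  have hg1 : s < g 1 := by
    simp only [g, one_mul, lt_add_iff_pos_right]; exact div_pos (by linarith) hr
  obtain ⟨u, ⟨hsu, hu1⟩, hgu⟩ := intermediate_value_Ioo hs1.le hg ⟨hgs, hg1⟩
  have hsv : s < s + (u - s) / r := lt_add_of_pos_right s (div_pos (by linarith) hr)
  refine ⟨u, s + (u - s) / r, ⟨hsu, hu1⟩, ⟨hsv, ?_⟩, hgu, by field_simp; ring⟩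
  nlinarith

lemma eq_of_hyperbola_line {r s u v u' v' : ℝ} (hr : 0 < r) (hu : 0 < u) (hv' : 0 < v')
    (h : u * v = s) (h' : u' * v' = s) (hl : u - s = r * (v - s)) (hl' : u' - s = r * (v' - s)) :
    u = u' ∧ v = v' := by
  have hprod : (u + r * v') * (v - v') = 0 := by linear_combination h - h' - v' * (hl - hl')
  have hv : v = v' := sub_eq_zero.mp ((mul_eq_zero.mp hprod).resolve_left (by positivity))
  exact ⟨by linear_combination hl - hl' + r * hv, hv⟩

section System

variable {a b r s x y : ℝ}

lemma hyperbola_line_of_system (ha : 0 < a) (hb : 0 < b) (hr : r = a * s) (hs : 0 < s)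
    (hs2 : a * b * s ^ 2 = 1) (hx : x ∈ Ioo 0 1) (hy : y ∈ Ioo 0 1)
    (h₁ : y / (1 - y) ^ 2 = a * x) (h₂ : x / (1 - x) ^ 2 = b * y) :
    (1 - x) * (1 - y) = s ∧ (1 - x) - s = r * ((1 - y) - s) := by
  obtain ⟨hx0, hx1⟩ := hx
  obtain ⟨hy0, hy1⟩ := hy
  rw [div_eq_iff (by nlinarith)] at h₁ h₂
  have hsq : a * b * ((1 - x) * (1 - y)) ^ 2 = a * b * s ^ 2 := by
    have hxy : x * y * (a * b * ((1 - x) * (1 - y)) ^ 2 - 1) = 0 := by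
      linear_combination -(y * h₂) - b * (1 - x) ^ 2 * y * h₁
    have := (mul_eq_zero.mp hxy).resolve_left (by positivity)
    linarith
  have hprod : (1 - x) * (1 - y) = s :=
    (pow_left_inj₀ (by nlinarith) hs.le two_ne_zero).mp (mul_left_cancel₀ (by positivity) hsq)
  have hlin : y * (1 - x) = r * x * (1 - y) := by
    linear_combination (1 - x) * h₁ + a * x * (1 - y) * hprod - x * (1 - y) * hr
  exact ⟨hprod, by linear_combination hlin + (1 - r) * hprod⟩

lemma system_of_hyperbola_line (hr : r = a * s) (hs2 : a * b * s ^ 2 = 1) (hx : x < 1) (hy : y < 1)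
    (hprod : (1 - x) * (1 - y) = s) (hline : (1 - x) - s = r * ((1 - y) - s)) :
    y / (1 - y) ^ 2 = a * x ∧ x / (1 - x) ^ 2 = b * y := by
  have hs : s ≠ 0 := by rintro rfl; simp at hs2
  have hlin : y * (1 - x) = r * x * (1 - y) := by linear_combination hline - (1 - r) * hprod
  constructor
  · rw [div_eq_iff (by nlinarith)]
    refine mul_left_cancel₀ hs ?_
    linear_combination (1 - y) * hlin - y * hprod + x * (1 - y) ^ 2 * hr
  · rw [div_eq_iff (by nlinarith)]
    linear_combination -x * hs2 - b * x * s * hr - b * r * x * hprod - b * (1 - x) * hlin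

end System

theorem existsUnique_solution_mem_Ioo {a b : ℝ} (ha : 0 < a) (hb : 0 < b) (hab : 1 < a * b) :
    ∃! p : ℝ × ℝ, p.1 ∈ Ioo 0 1 ∧ p.2 ∈ Ioo 0 1 ∧
      p.2 / (1 - p.2) ^ 2 = a * p.1 ∧ p.1 / (1 - p.1) ^ 2 = b * p.2 := by
  set s := (√(a * b))⁻¹
  have hsqrt : 1 < √(a * b) := by rw [Real.lt_sqrt zero_le_one]; simpa using hab
  have hs : 0 < s := by positivity
  have hs1 : s < 1 := inv_lt_one_of_one_lt₀ hsqrt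
  have hs2 : a * b * s ^ 2 = 1 := by
    rw [inv_pow, Real.sq_sqrt (by positivity), mul_inv_cancel₀ (by positivity)]
  obtain ⟨u, v, hu, hv, huv, hline⟩ := exists_hyperbola_line (mul_pos ha hs) hs hs1
  refine ⟨(1 - u, 1 - v), ⟨⟨by linarith [hu.2], by linarith [hu.1]⟩,
    ⟨by linarith [hv.2], by linarith [hv.1]⟩, ?_⟩, ?_⟩
  · exact system_of_hyperbola_line rfl hs2 (by linarith [hu.1]) (by linarith [hv.1])
      (by simpa using huv) (by simpa using hline)
  · rintro ⟨x, y⟩ ⟨hx, hy, h₁, h₂⟩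
    obtain ⟨hprod, hline'⟩ := hyperbola_line_of_system ha hb rfl hs hs2 hx hy h₁ h₂
    obtain ⟨hxu, hyv⟩ := eq_of_hyperbola_line (mul_pos ha hs) (by linarith [hx.2]) (hs.trans hv.1)
      hprod huv hline' hline
    exact Prod.ext (by linarith) (by linarith)

/-- For `α ∈ (0,1)`, `β > 0` with `β⁴α(1-α) > 1`, besides the trivial solution `(0,0)`,
the system `q₂/(1-q₂)² = β²α q₁`, `q₁/(1-q₁)² = β²(1-α) q₂` has exactly one solution
with both coordinates in `(0,1)`. -/
theorem stmt8 (α β : ℝ) (hα : α ∈ Set.Ioo (0 : ℝ) 1) (hβ : 0 < β)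
    (hlarge : 1 < β ^ 4 * α * (1 - α)) :
    ((0 : ℝ) / (1 - (0 : ℝ)) ^ 2 = β ^ 2 * α * 0 ∧
      (0 : ℝ) / (1 - (0 : ℝ)) ^ 2 = β ^ 2 * (1 - α) * 0) ∧
    ∃! p : ℝ × ℝ, p.1 ∈ Set.Ioo (0 : ℝ) 1 ∧ p.2 ∈ Set.Ioo (0 : ℝ) 1 ∧
      p.2 / (1 - p.2) ^ 2 = β ^ 2 * α * p.1 ∧
      p.1 / (1 - p.1) ^ 2 = β ^ 2 * (1 - α) * p.2 := by
  obtain ⟨hα0, hα1⟩ := hα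
  refine ⟨by simp, existsUnique_solution_mem_Ioo (by positivity) (mul_pos (by positivity) (by linarith)) ?_⟩
  calc 1 < β ^ 4 * α * (1 - α) := hlarge
    _ = β ^ 2 * α * (β ^ 2 * (1 - α)) := by ring
end

section
/- With b₁ = b₂ = 0 and β⁴α(1-α) < 1, the origin (0,0) is the unique stationary point of RS in [0,1)², and RS(0,0) = min_{q₂∈[0,1)} max_{q₁∈[0,1)} RS(q₁,q₂). -/
/-!
`r = rsR k t` is the root in `[0,1)` of `r / (1 - r)² = k t`, and this relation makes the partial
derivatives of `RS` explicit: `∂₁RS = c (q₂ - r₂(q₁))` and `∂₂RS = c (q₁ - r₁(q₂))` with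
`c = β²α(1-α)/2`. Since `rsR k t ≤ k t`, a stationary point in `[0,1)²` satisfies
`q₁ = r₁(r₂(q₁)) ≤ β⁴α(1-α) q₁`, so it is the origin.

For the min-max value: `RS(·, 0)` is decreasing, so the inner supremum at `q₂ = 0` is `RS(0,0)`;
and `RS` increases along the curve `q₂ ↦ (r₁(q₂), q₂)`, where its derivative is
`c r₁'(q₂) (q₂ - r₂(r₁(q₂))) ≥ 0`, so every inner supremum is at least `RS(0,0)`.
-/

open Real Set

noncomputable section

/-- The paper's `r₁(q₂)` is `rsR (β²(1-α)) q₂` and its `r₂(q₁)` is `rsR (β²α) q₁`. -/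
def rsR (k t : ℝ) : ℝ := (√(1 + 4 * (k * t)) - 1) / (√(1 + 4 * (k * t)) + 1)

def rsPart (k t : ℝ) : ℝ :=
  k * t * (1 - rsR k t) + (rsR k t / (1 - rsR k t) + log (1 - rsR k t))

/-- `RS`, regrouped using `β²α(1-α)/2 = (α/2)·β²(1-α) = ((1-α)/2)·β²α`. -/
def rsFun (α β q₁ q₂ : ℝ) : ℝ :=
  β ^ 2 * α * (1 - α) / 2 * (1 - q₁) * (1 - q₂)
    + α / 2 * rsPart (β ^ 2 * (1 - α)) q₂ + (1 - α) / 2 * rsPart (β ^ 2 * α) q₁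

end

section rsR

variable {k t : ℝ}

lemma one_sub_rsR (k t : ℝ) : 1 - rsR k t = 2 / (√(1 + 4 * (k * t)) + 1) := by
  have : 0 < √(1 + 4 * (k * t)) + 1 := by positivity
  rw [rsR]; field_simp; ring

lemma rsR_lt_one (k t : ℝ) : rsR k t < 1 := by
  have : 0 < 2 / (√(1 + 4 * (k * t)) + 1) := by positivity
  linarith [one_sub_rsR k t]

@[simp] lemma rsR_zero (k : ℝ) : rsR k 0 = 0 := by simp [rsR]

lemma rsR_nonneg (h : 0 ≤ k * t) : 0 ≤ rsR k t :=
  div_nonneg (sub_nonneg.2 (one_le_sqrt.2 (by linarith))) (by positivity)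

lemma rsR_div_one_sub_sq (h : 0 ≤ 1 + 4 * (k * t)) : rsR k t / (1 - rsR k t) ^ 2 = k * t := by
  have hs : √(1 + 4 * (k * t)) ^ 2 = 1 + 4 * (k * t) := sq_sqrt h
  have : 0 < √(1 + 4 * (k * t)) + 1 := by positivity
  rw [one_sub_rsR, rsR]
  generalize √(1 + 4 * (k * t)) = s at hs this ⊢
  field_simp
  linear_combination hs

lemma rsR_le_mul (h : 0 ≤ k * t) : rsR k t ≤ k * t := by
  have h₀ := rsR_nonneg h
  have h₁ := rsR_lt_one k t
  rw [← rsR_div_one_sub_sq (by linarith)]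
  exact le_div_self h₀ (by positivity) (pow_le_one₀ (by linarith) (by linarith))

lemma rsR_rsR_le {k₁ k₂ : ℝ} (hk₁ : 0 ≤ k₁) (hk₂ : 0 ≤ k₂) (ht : 0 ≤ t) :
    rsR k₂ (rsR k₁ t) ≤ k₁ * k₂ * t :=
  calc rsR k₂ (rsR k₁ t) ≤ k₂ * rsR k₁ t := rsR_le_mul (mul_nonneg hk₂ (rsR_nonneg (by positivity)))
    _ ≤ k₂ * (k₁ * t) := mul_le_mul_of_nonneg_left (rsR_le_mul (by positivity)) hk₂
    _ = k₁ * k₂ * t := by ring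

lemma hasDerivAt_rsR (h : 0 < 1 + 4 * (k * t)) :
    HasDerivAt (rsR k) (4 * k / (√(1 + 4 * (k * t)) * (√(1 + 4 * (k * t)) + 1) ^ 2)) t := by
  have hs : HasDerivAt (fun t => √(1 + 4 * (k * t))) (4 * k / (2 * √(1 + 4 * (k * t)))) t := by
    have := (((hasDerivAt_id t).const_mul k).const_mul 4).const_add 1
    simpa using this.sqrt h.ne'
  have hpos : 0 < √(1 + 4 * (k * t)) := sqrt_pos.2 h
  refine ((hs.sub_const 1).div (hs.add_const 1) (by positivity)).congr_deriv ?_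
  field_simp
  ring

lemma hasDerivAt_div_one_sub_add_log {u : ℝ} (hu : u < 1) :
    HasDerivAt (fun u => u / (1 - u) + log (1 - u)) (u / (1 - u) ^ 2) u := by
  have h₁ : HasDerivAt (fun u => 1 - u) (-1) u := by simpa using (hasDerivAt_id' u).const_sub 1
  refine (((hasDerivAt_id' u).div h₁ (by linarith)).add (h₁.log (by linarith))).congr_deriv ?_
  field_simp
  ring

/-- Since `r / (1 - r)²` is the derivative of `r / (1 - r) + log (1 - r)`, the defining relation
of `rsR` cancels the `t`-derivative of `rsR` in `rsPart`. -/
lemma hasDerivAt_rsPart (h : 0 < 1 + 4 * (k * t)) :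
    HasDerivAt (rsPart k) (k * (1 - rsR k t)) t := by
  have hr := hasDerivAt_rsR h
  have hψ := (hasDerivAt_div_one_sub_add_log (rsR_lt_one k t)).comp t hr
  refine ((((hasDerivAt_id' t).const_mul k).mul (hr.const_sub 1)).add hψ).congr_deriv ?_
  rw [rsR_div_one_sub_sq h.le]
  ring

end rsR

section rsFun

variable {α β : ℝ}

theorem HasDerivAt.rsFun {φ ψ : ℝ → ℝ} {φ' ψ' t : ℝ} (hφ : HasDerivAt φ φ' t)
    (hψ : HasDerivAt ψ ψ' t) (hα₀ : 0 ≤ α) (hα₁ : α ≤ 1) (hφ₀ : 0 ≤ φ t) (hψ₀ : 0 ≤ ψ t) :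
    HasDerivAt (fun t => rsFun α β (φ t) (ψ t))
      (β ^ 2 * α * (1 - α) / 2 * (φ' * (ψ t - rsR (β ^ 2 * α) (φ t))
        + ψ' * (φ t - rsR (β ^ 2 * (1 - α)) (ψ t)))) t := by
  have h₁ : 0 ≤ β ^ 2 * (1 - α) * ψ t := by have := sub_nonneg.2 hα₁; positivity
  have h₂ : 0 ≤ β ^ 2 * α * φ t := by positivity
  have hP₁ := (hasDerivAt_rsPart (by linarith : 0 < 1 + 4 * (β ^ 2 * (1 - α) * ψ t))).comp t hψ
  have hP₂ := (hasDerivAt_rsPart (by linarith : 0 < 1 + 4 * (β ^ 2 * α * φ t))).comp t hφ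
  refine (((((hφ.const_sub 1).const_mul (β ^ 2 * α * (1 - α) / 2)).mul (hψ.const_sub 1)).add
    (hP₁.const_mul (α / 2))).add (hP₂.const_mul ((1 - α) / 2))).congr_deriv ?_
  ring

lemma deriv_rsFun_left {q₁ q₂ : ℝ} (hα₀ : 0 ≤ α) (hα₁ : α ≤ 1) (hq₁ : 0 ≤ q₁) (hq₂ : 0 ≤ q₂) :
    deriv (fun q => rsFun α β q q₂) q₁ = β ^ 2 * α * (1 - α) / 2 * (q₂ - rsR (β ^ 2 * α) q₁) := by
  have := (hasDerivAt_id' q₁).rsFun (hasDerivAt_const q₁ q₂) hα₀ hα₁ hq₁ hq₂ (β := β)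
  rw [this.deriv]
  ring

lemma deriv_rsFun_right {q₁ q₂ : ℝ} (hα₀ : 0 ≤ α) (hα₁ : α ≤ 1) (hq₁ : 0 ≤ q₁) (hq₂ : 0 ≤ q₂) :
    deriv (fun q => rsFun α β q₁ q) q₂
      = β ^ 2 * α * (1 - α) / 2 * (q₁ - rsR (β ^ 2 * (1 - α)) q₂) := by
  have := (hasDerivAt_const q₂ q₁).rsFun (hasDerivAt_id' q₂) hα₀ hα₁ hq₁ hq₂ (β := β)
  rw [this.deriv]
  ring

lemma eq_zero_of_deriv_rsFun_eq_zero {q₁ q₂ : ℝ} (hα : α ∈ Ioo 0 1) (hβ : 0 < β)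
    (hsmall : β ^ 4 * α * (1 - α) < 1) (hq₁ : 0 ≤ q₁) (hq₂ : 0 ≤ q₂)
    (h₁ : deriv (fun q => rsFun α β q q₂) q₁ = 0) (h₂ : deriv (fun q => rsFun α β q₁ q) q₂ = 0) :
    q₁ = 0 ∧ q₂ = 0 := by
  obtain ⟨hα₀, hα₁⟩ := hα
  have hc : β ^ 2 * α * (1 - α) / 2 ≠ 0 := by have := sub_pos.2 hα₁; positivity
  rw [deriv_rsFun_left hα₀.le hα₁.le hq₁ hq₂, mul_eq_zero, sub_eq_zero] at h₁
  rw [deriv_rsFun_right hα₀.le hα₁.le hq₁ hq₂, mul_eq_zero, sub_eq_zero] at h₂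
  obtain rfl := h₁.resolve_left hc
  have hfix : q₁ ≤ β ^ 4 * α * (1 - α) * q₁ :=
    calc q₁ = rsR (β ^ 2 * (1 - α)) (rsR (β ^ 2 * α) q₁) := h₂.resolve_left hc
      _ ≤ β ^ 2 * α * (β ^ 2 * (1 - α)) * q₁ :=
        rsR_rsR_le (by positivity) (by have := sub_pos.2 hα₁; positivity) hq₁
      _ = β ^ 4 * α * (1 - α) * q₁ := by ring
  obtain rfl : q₁ = 0 := le_antisymm (by nlinarith) hq₁
  exact ⟨rfl, rsR_zero _⟩

lemma antitoneOn_rsFun_left_zero (hα₀ : 0 ≤ α) (hα₁ : α ≤ 1) :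
    AntitoneOn (fun q => rsFun α β q 0) (Ici 0) := by
  have hd (q : ℝ) (hq : 0 ≤ q) := (hasDerivAt_id' q).rsFun (hasDerivAt_const q 0) hα₀ hα₁ hq le_rfl
    (β := β)
  refine antitoneOn_of_hasDerivWithinAt_nonpos (convex_Ici 0)
    (fun q hq => (hd q hq).continuousAt.continuousWithinAt)
    (fun q hq => (hd q (interior_subset hq)).hasDerivWithinAt) fun q hq => ?_
  have := rsR_nonneg (mul_nonneg (by positivity : 0 ≤ β ^ 2 * α) (interior_subset hq : 0 ≤ q))
  have := sub_nonneg.2 hα₁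
  have : 0 ≤ β ^ 2 * α * (1 - α) / 2 * rsR (β ^ 2 * α) q := by positivity
  linarith

/-- `RS` increases along the curve `q ↦ (r₁(q), q)`, on which `∂₂RS` vanishes. -/
lemma monotoneOn_rsFun_rsR (hα₀ : 0 ≤ α) (hα₁ : α ≤ 1) (hsmall : β ^ 4 * α * (1 - α) ≤ 1) :
    MonotoneOn (fun q => rsFun α β (rsR (β ^ 2 * (1 - α)) q) q) (Ici 0) := by
  have hk : 0 ≤ β ^ 2 * (1 - α) := by have := sub_nonneg.2 hα₁; positivity
  have hr (q : ℝ) (hq : 0 ≤ q) := hasDerivAt_rsR (by nlinarith : 0 < 1 + 4 * (β ^ 2 * (1 - α) * q))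
  have hd (q : ℝ) (hq : 0 ≤ q) := (hr q hq).rsFun (hasDerivAt_id' q) hα₀ hα₁
    (rsR_nonneg (mul_nonneg hk hq)) hq (β := β)
  refine monotoneOn_of_hasDerivWithinAt_nonneg (convex_Ici 0)
    (fun q hq => (hd q hq).continuousAt.continuousWithinAt)
    (fun q hq => (hd q (interior_subset hq)).hasDerivWithinAt) fun q hq => ?_
  replace hq : 0 ≤ q := interior_subset hq
  have hfix : rsR (β ^ 2 * α) (rsR (β ^ 2 * (1 - α)) q) ≤ q :=
    calc _ ≤ β ^ 2 * (1 - α) * (β ^ 2 * α) * q := rsR_rsR_le hk (by positivity) hq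
      _ = β ^ 4 * α * (1 - α) * q := by ring
      _ ≤ q := mul_le_of_le_one_left hq hsmall
  have := sub_nonneg.2 hfix
  have := sub_nonneg.2 hα₁
  simp only [sub_self, mul_zero, add_zero]
  positivity

lemma bddAbove_rsFun_left {q₂ : ℝ} (hα₀ : 0 ≤ α) (hα₁ : α ≤ 1) (hq₂ : 0 ≤ q₂) :
    BddAbove ((fun q => rsFun α β q q₂) '' Ico 0 1) := by
  have hcont : ContinuousOn (fun q => rsFun α β q q₂) (Icc 0 1) := fun q hq =>
    ((hasDerivAt_id' q).rsFun (hasDerivAt_const q q₂) hα₀ hα₁ hq.1 hq₂).continuousAt.continuousWithinAt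
  exact (isCompact_Icc.bddAbove_image hcont).mono (image_mono Ico_subset_Icc_self)

end rsFun

theorem csInf_csSup_eq_of_saddle {ι κ γ : Type*} [ConditionallyCompleteLattice γ] {f : ι → κ → γ}
    {s : Set ι} {t : Set κ} {x₀ : ι} {y₀ : κ} (hx₀ : x₀ ∈ s) (hy₀ : y₀ ∈ t)
    (hbdd : ∀ y ∈ t, BddAbove ((f · y) '' s)) (hmax : ∀ x ∈ s, f x y₀ ≤ f x₀ y₀)
    (hlow : ∀ y ∈ t, ∃ x ∈ s, f x₀ y₀ ≤ f x y) :
    sInf ((fun y => sSup ((f · y) '' s)) '' t) = f x₀ y₀ := by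
  have hsup : sSup ((f · y₀) '' s) = f x₀ y₀ :=
    IsGreatest.csSup_eq ⟨⟨x₀, hx₀, rfl⟩, by rintro _ ⟨x, hx, rfl⟩; exact hmax x hx⟩
  refine IsLeast.csInf_eq ⟨⟨y₀, hy₀, hsup⟩, ?_⟩
  rintro _ ⟨y, hy, rfl⟩
  obtain ⟨x, hx, hle⟩ := hlow y hy
  exact hle.trans (le_csSup (hbdd y hy) ⟨x, hx, rfl⟩)

/-- With `b₁ = b₂ = 0` and `β⁴α(1-α) < 1`, the origin is the unique stationary point of `RS`
in `[0,1)²`, and `RS(0,0) = min_{q₂} max_{q₁} RS(q₁,q₂)`. -/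
theorem stmt12 (α β : ℝ) (hα : α ∈ Set.Ioo (0 : ℝ) 1) (hβ : 0 < β)
    (hsmall : β ^ 4 * α * (1 - α) < 1) :
    let r₁ : ℝ → ℝ := fun q₂ =>
      (Real.sqrt (1 + 4 * (β ^ 2 * (1 - α) * q₂)) - 1) /
        (Real.sqrt (1 + 4 * (β ^ 2 * (1 - α) * q₂)) + 1)
    let r₂ : ℝ → ℝ := fun q₁ =>
      (Real.sqrt (1 + 4 * (β ^ 2 * α * q₁)) - 1) /
        (Real.sqrt (1 + 4 * (β ^ 2 * α * q₁)) + 1)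
    let RS : ℝ → ℝ → ℝ := fun q₁ q₂ =>
      β ^ 2 * α * (1 - α) / 2 * (1 - q₁) * (1 - q₂)
      + β ^ 2 * α * (1 - α) / 2 * (q₂ * (1 - r₁ q₂) + q₁ * (1 - r₂ q₁))
      + α / 2 * (r₁ q₂ / (1 - r₁ q₂) + Real.log (1 - r₁ q₂))
      + (1 - α) / 2 * (r₂ q₁ / (1 - r₂ q₁) + Real.log (1 - r₂ q₁))
    (deriv (fun t => RS t 0) 0 = 0 ∧ deriv (fun t => RS 0 t) 0 = 0) ∧
      (∀ p : ℝ × ℝ, p.1 ∈ Set.Ico (0 : ℝ) 1 → p.2 ∈ Set.Ico (0 : ℝ) 1 →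
        deriv (fun t => RS t p.2) p.1 = 0 → deriv (fun t => RS p.1 t) p.2 = 0 →
        p = (0, 0)) ∧
      RS 0 0 =
        sInf ((fun q₂ => sSup ((fun q₁ => RS q₁ q₂) '' Set.Ico 0 1)) '' Set.Ico 0 1) := by
  intro r₁ r₂ RS
  have hRS : RS = rsFun α β := by
    funext q₁ q₂
    simp only [RS, r₁, r₂, rsFun, rsPart, rsR]
    ring
  have hα₀ := hα.1.le
  have hα₁ := hα.2.le
  rw [hRS]
  refine ⟨⟨?_, ?_⟩, ?_, ?_⟩
  · simp [deriv_rsFun_left hα₀ hα₁ le_rfl le_rfl]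
  · simp [deriv_rsFun_right hα₀ hα₁ le_rfl le_rfl]
  · rintro ⟨q₁, q₂⟩ hq₁ hq₂ h₁ h₂
    obtain ⟨rfl, rfl⟩ := eq_zero_of_deriv_rsFun_eq_zero hα hβ hsmall hq₁.1 hq₂.1 h₁ h₂
    rfl
  symm
  refine csInf_csSup_eq_of_saddle (x₀ := 0) (y₀ := 0) ⟨le_rfl, one_pos⟩ ⟨le_rfl, one_pos⟩
    (fun y hy => bddAbove_rsFun_left hα₀ hα₁ hy.1)
    (fun x hx => antitoneOn_rsFun_left_zero hα₀ hα₁ self_mem_Ici hx.1 hx.1) fun y hy => ?_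
  have hk : 0 ≤ β ^ 2 * (1 - α) * y := by have := sub_nonneg.2 hα₁; have := hy.1; positivity
  refine ⟨rsR (β ^ 2 * (1 - α)) y, ⟨rsR_nonneg hk, rsR_lt_one _ _⟩, ?_⟩
  simpa using monotoneOn_rsFun_rsR hα₀ hα₁ hsmall.le self_mem_Ici hy.1 hy.1
end
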